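/- For a submodular monotone set function V with V(∅) = 0 and a subset S ⊆ N chosen uniformly at random among subsets of size r, the expected value E[V(S)] ≥ (r/|N|) · V(N); hence for submodular V the interaction difference (r/c)·V(N) − E_S[V(S)] over uniformly random S of size r is nonpositive. -/
import Mathlib

open Finset

section Aux
variable {α : Type*} [Fintype α] [DecidableEq α]

/-- Key double counting: summing `h (insert x S)` over `k`-subsets `S` of `U` and
`x ∈ U \ S` counts each `(k+1)`-subset `k+1` times. -/
lemma key_sum (U : Finset α) (h : Finset α → ℝ) (k : ℕ) :
    ∑ S ∈ U.powersetCard k, ∑ x ∈ U \ S, h (insert x S)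
      = (k + 1 : ℝ) * ∑ T ∈ U.powersetCard (k + 1), h T := by
  have hrhs : (k + 1 : ℝ) * ∑ T ∈ U.powersetCard (k + 1), h T
      = ∑ T ∈ U.powersetCard (k + 1), ∑ _x ∈ T, h T := by
    rw [Finset.mul_sum]
    refine Finset.sum_congr rfl fun T hT => ?_
    rw [Finset.sum_const, nsmul_eq_mul, (Finset.mem_powersetCard.mp hT).2]
    push_cast; ring
  rw [hrhs, Finset.sum_sigma', Finset.sum_sigma']
  refine Finset.sum_bij' (fun p _ => (⟨insert p.2 p.1, p.2⟩ : Σ _ : Finset α, α))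
      (fun q _ => (⟨q.1.erase q.2, q.2⟩ : Σ _ : Finset α, α)) ?_ ?_ ?_ ?_ ?_
  · rintro ⟨S, x⟩ hp
    rw [Finset.mem_sigma] at hp ⊢
    obtain ⟨hS, hx⟩ := hp
    rw [Finset.mem_powersetCard] at hS
    rw [Finset.mem_sdiff] at hx
    refine ⟨Finset.mem_powersetCard.mpr ⟨?_, ?_⟩, Finset.mem_insert_self _ _⟩
    · exact Finset.insert_subset hx.1 hS.1
    · rw [Finset.card_insert_of_notMem hx.2, hS.2]
  · rintro ⟨T, x⟩ hq
    rw [Finset.mem_sigma] at hq ⊢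
    obtain ⟨hT, hx⟩ := hq
    rw [Finset.mem_powersetCard] at hT
    refine ⟨Finset.mem_powersetCard.mpr ⟨?_, ?_⟩, Finset.mem_sdiff.mpr ⟨hT.1 hx, Finset.notMem_erase _ _⟩⟩
    · exact (Finset.erase_subset _ _).trans hT.1
    · rw [Finset.card_erase_of_mem hx, hT.2]
      omega
  · rintro ⟨S, x⟩ hp
    rw [Finset.mem_sigma, Finset.mem_sdiff] at hp
    simp only [Sigma.mk.inj_iff, heq_eq_eq, and_true]
    exact Finset.erase_insert hp.2.2
  · rintro ⟨T, x⟩ hq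
    rw [Finset.mem_sigma] at hq
    simp only [Sigma.mk.inj_iff, heq_eq_eq, and_true]
    first
    | exact Finset.insert_erase hq.2
    | rfl
  · intros; rfl

variable (V : Finset α → ℝ)

/-- total value over `k`-subsets. -/
noncomputable def gg (k : ℕ) : ℝ := ∑ S ∈ Finset.univ.powersetCard k, V S

/-- total marginal gain over pairs of a `k`-subset and an outside element. -/
noncomputable def dd (k : ℕ) : ℝ :=
  ∑ S ∈ Finset.univ.powersetCard k, ∑ x ∈ Sᶜ, (V (insert x S) - V S)

lemma gg_succ (k : ℕ) :
    (k + 1 : ℝ) * gg V (k + 1) = ((Fintype.card α - k : ℕ) : ℝ) * gg V k + dd V k := by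
  have h2 : dd V k = (∑ S ∈ Finset.univ.powersetCard k, ∑ x ∈ Finset.univ \ S, V (insert x S))
      - ((Fintype.card α - k : ℕ) : ℝ) * gg V k := by
    rw [dd, gg, Finset.mul_sum, ← Finset.sum_sub_distrib]
    refine Finset.sum_congr rfl fun S hS => ?_
    rw [show Sᶜ = Finset.univ \ S from by simp [Finset.compl_eq_univ_sdiff],
      Finset.sum_sub_distrib, Finset.sum_const, nsmul_eq_mul,
      Finset.card_sdiff_of_subset (Finset.subset_univ S), Finset.card_univ,
      (Finset.mem_powersetCard.mp hS).2]
  have h3 := key_sum Finset.univ V k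
  rw [show gg V (k+1) = ∑ T ∈ Finset.univ.powersetCard (k+1), V T from rfl, ← h3, h2]
  ring

lemma dd_le (hmono : ∀ A B : Finset α, A ⊆ B → V A ≤ V B)
    (hsub : ∀ (A B : Finset α) (x : α), A ⊆ B → x ∉ B →
      V (insert x B) - V B ≤ V (insert x A) - V A) (k : ℕ) :
    (k + 1 : ℝ) * dd V (k + 1) ≤ ((Fintype.card α - (k + 1) : ℕ) : ℝ) * dd V k := by
  have hswap : ∀ (F : α → Finset α → ℝ) (m : ℕ),
      ∑ x : α, ∑ T ∈ (Finset.univ.erase x).powersetCard m, F x T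
        = ∑ T ∈ Finset.univ.powersetCard m, ∑ x ∈ Tᶜ, F x T := by
    intro F m
    refine Finset.sum_comm' ?_
    intro x T
    simp only [Finset.mem_univ, true_and, Finset.mem_powersetCard, Finset.subset_erase,
      Finset.mem_compl, Finset.subset_univ, and_true]
  have eq1 : ∑ x : α, ∑ S ∈ (Finset.univ.erase x).powersetCard k,
        ∑ y ∈ (Finset.univ.erase x) \ S, (V (insert x (insert y S)) - V (insert y S))
      = (k + 1 : ℝ) * dd V (k + 1) := by
    rw [Finset.sum_congr rfl
        (fun x _ => key_sum (Finset.univ.erase x) (fun T => V (insert x T) - V T) k),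
      ← Finset.mul_sum, hswap (fun x T => V (insert x T) - V T) (k + 1)]
    rfl
  have eq2 : ∑ x : α, ∑ S ∈ (Finset.univ.erase x).powersetCard k,
        ∑ y ∈ (Finset.univ.erase x) \ S, (V (insert x S) - V S)
      = ((Fintype.card α - (k + 1) : ℕ) : ℝ) * dd V k := by
    have step : ∀ x : α, ∀ S ∈ (Finset.univ.erase x).powersetCard k,
        ∑ y ∈ (Finset.univ.erase x) \ S, (V (insert x S) - V S)
          = ((Fintype.card α - (k + 1) : ℕ) : ℝ) * (V (insert x S) - V S) := by
      intro x S hS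
      rw [Finset.mem_powersetCard] at hS
      rw [Finset.sum_const, nsmul_eq_mul]
      congr 2
      rw [Finset.card_sdiff_of_subset hS.1, Finset.card_erase_of_mem (Finset.mem_univ x),
        Finset.card_univ, hS.2]
      omega
    calc ∑ x : α, ∑ S ∈ (Finset.univ.erase x).powersetCard k,
          ∑ y ∈ (Finset.univ.erase x) \ S, (V (insert x S) - V S)
        = ∑ x : α, ∑ S ∈ (Finset.univ.erase x).powersetCard k,
            ((Fintype.card α - (k + 1) : ℕ) : ℝ) * (V (insert x S) - V S) := by
          exact Finset.sum_congr rfl fun x _ => Finset.sum_congr rfl (step x)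
      _ = ((Fintype.card α - (k + 1) : ℕ) : ℝ) * ∑ x : α,
            ∑ S ∈ (Finset.univ.erase x).powersetCard k, (V (insert x S) - V S) := by
          rw [Finset.mul_sum]
          exact Finset.sum_congr rfl fun x _ => (Finset.mul_sum _ _ _).symm
      _ = ((Fintype.card α - (k + 1) : ℕ) : ℝ) * dd V k := by
          rw [hswap (fun x S => V (insert x S) - V S) k]; rfl
  rw [← eq1, ← eq2]
  refine Finset.sum_le_sum fun x _ => Finset.sum_le_sum fun S hS => Finset.sum_le_sum fun y hy => ?_
  rw [Finset.mem_powersetCard, Finset.subset_erase] at hS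
  rw [Finset.mem_sdiff, Finset.mem_erase] at hy
  exact hsub S (insert y S) x (Finset.subset_insert _ _)
    (by simp only [Finset.mem_insert]; push_neg
        exact ⟨fun h => hy.1.1 h.symm, hS.1.2⟩)

/-- normalized average value of a `k`-subset. -/
noncomputable def ff (k : ℕ) : ℝ := gg V k / (((Fintype.card α).choose k : ℕ) : ℝ)

/-- average marginal gain. -/
noncomputable def DD (k : ℕ) : ℝ :=
  dd V k / (((Fintype.card α - k : ℕ) : ℝ) * (((Fintype.card α).choose k : ℕ) : ℝ))

lemma ff_zero (hV0 : V ∅ = 0) : ff V 0 = 0 := by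
  simp [ff, gg, hV0]

lemma ff_card : ff V (Fintype.card α) = V Finset.univ := by
  rw [ff, gg, ← Finset.card_univ, Finset.powersetCard_self, Nat.choose_self]
  simp

lemma ff_step (k : ℕ) (hk : k < Fintype.card α) : ff V (k + 1) = ff V k + DD V k := by
  set c := Fintype.card α
  have hb : (0:ℝ) < ((c - k : ℕ) : ℝ) := by
    have : 0 < c - k := by omega
    exact_mod_cast this
  have ha : (0:ℝ) < (k + 1 : ℝ) := by positivity
  have hC0 : (0:ℝ) < ((c.choose k : ℕ) : ℝ) := by
    exact_mod_cast Nat.choose_pos (le_of_lt hk)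
  have hC1 : (0:ℝ) < ((c.choose (k+1) : ℕ) : ℝ) := by
    exact_mod_cast Nat.choose_pos hk
  have hcc : ((c.choose (k+1) : ℕ) : ℝ) * (k + 1 : ℝ)
      = ((c.choose k : ℕ) : ℝ) * ((c - k : ℕ) : ℝ) := by
    exact_mod_cast Nat.choose_succ_right_eq c k
  have hgs := gg_succ V k
  have key : gg V (k+1) = (((c - k : ℕ) : ℝ) * gg V k + dd V k) / (k + 1 : ℝ) := by
    rw [eq_div_iff (ne_of_gt ha)]
    linarith [hgs]
  rw [ff, ff, DD, key, div_div]
  rw [show (k + 1 : ℝ) * ((c.choose (k+1) : ℕ) : ℝ)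
      = ((c - k : ℕ) : ℝ) * ((c.choose k : ℕ) : ℝ) from by rw [mul_comm, hcc]; ring]
  rw [add_div, mul_div_mul_left _ _ (ne_of_gt hb)]

lemma DD_step (hmono : ∀ A B : Finset α, A ⊆ B → V A ≤ V B)
    (hsub : ∀ (A B : Finset α) (x : α), A ⊆ B → x ∉ B →
      V (insert x B) - V B ≤ V (insert x A) - V A)
    (k : ℕ) (hk : k + 1 < Fintype.card α) : DD V (k + 1) ≤ DD V k := by
  set c := Fintype.card α
  have hb1 : (0:ℝ) < ((c - (k+1) : ℕ) : ℝ) := by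
    have : 0 < c - (k+1) := by omega
    exact_mod_cast this
  have ha : (0:ℝ) < (k + 1 : ℝ) := by positivity
  have hC1 : (0:ℝ) < ((c.choose (k+1) : ℕ) : ℝ) := by
    exact_mod_cast Nat.choose_pos (le_of_lt hk)
  have hcc : ((c.choose (k+1) : ℕ) : ℝ) * (k + 1 : ℝ)
      = ((c.choose k : ℕ) : ℝ) * ((c - k : ℕ) : ℝ) := by
    exact_mod_cast Nat.choose_succ_right_eq c k
  have hDk : DD V k = dd V k / ((k + 1 : ℝ) * ((c.choose (k+1) : ℕ) : ℝ)) := by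
    rw [DD]
    congr 1
    rw [mul_comm, ← hcc, mul_comm]
  rw [hDk, DD, div_le_div_iff₀ (by positivity) (by positivity)]
  have := dd_le V hmono hsub k
  nlinarith [hC1, this]

lemma DD_antitone (hmono : ∀ A B : Finset α, A ⊆ B → V A ≤ V B)
    (hsub : ∀ (A B : Finset α) (x : α), A ⊆ B → x ∉ B →
      V (insert x B) - V B ≤ V (insert x A) - V A)
    {i j : ℕ} (hij : i ≤ j) (hj : j < Fintype.card α) : DD V j ≤ DD V i := by
  induction j with
  | zero => rw [Nat.le_zero.mp hij]
  | succ j ih =>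
    rcases Nat.lt_or_ge i (j+1) with h | h
    · exact (DD_step V hmono hsub j hj).trans (ih (by omega) (by omega))
    · have : i = j + 1 := by omega
      rw [this]

lemma ff_telescope (m : ℕ) (hm : m ≤ Fintype.card α) (hV0 : V ∅ = 0) :
    ff V m = ∑ i ∈ Finset.range m, DD V i := by
  induction m with
  | zero => simpa using ff_zero V hV0
  | succ m ih =>
    rw [Finset.sum_range_succ, ← ih (by omega), ff_step V m (by omega)]

end Aux

/-- For a monotone submodular `V` with `V ∅ = 0`, the expected value of a
uniformly random `r`-subset is at least the proportional share
`(r/c)·V(N)`; hence the expected interaction difference is nonpositive. -/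
theorem submodular_expected_interaction_difference_nonpos
    {α : Type*} [Fintype α] [DecidableEq α] (r : ℕ) (hr : r ≤ Fintype.card α)
    (V : Finset α → ℝ) (hV0 : V ∅ = 0)
    (hmono : ∀ A B : Finset α, A ⊆ B → V A ≤ V B)
    (hsub : ∀ (A B : Finset α) (x : α), A ⊆ B → x ∉ B →
      V (insert x B) - V B ≤ V (insert x A) - V A) :
    ((r : ℝ) / (Fintype.card α : ℝ)) * V Finset.univ ≤
      (∑ S ∈ Finset.univ.powersetCard r, V S) / (((Fintype.card α).choose r : ℝ)) ∧
    ((r : ℝ) / (Fintype.card α : ℝ)) * V Finset.univ -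
      (∑ S ∈ Finset.univ.powersetCard r, V S) / (((Fintype.card α).choose r : ℝ)) ≤ 0 := by
  have main : ((r : ℝ) / (Fintype.card α : ℝ)) * V Finset.univ ≤
      (∑ S ∈ Finset.univ.powersetCard r, V S) / (((Fintype.card α).choose r : ℝ)) := by
    show ((r : ℝ) / (Fintype.card α : ℝ)) * V Finset.univ ≤ ff V r
    rcases Nat.eq_zero_or_pos (Fintype.card α) with hc | hc
    · have hr0 : r = 0 := by omega
      subst hr0
      rw [ff_zero V hV0, hc]
      simp
    · have hc0 : (0:ℝ) < (Fintype.card α : ℝ) := by exact_mod_cast hc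
      have hSr := ff_telescope V r hr hV0
      have hSc := ff_telescope V (Fintype.card α) le_rfl hV0
      have hsplit : ∑ i ∈ Finset.range (Fintype.card α), DD V i
          = ∑ i ∈ Finset.range r, DD V i + ∑ i ∈ Finset.Ico r (Fintype.card α), DD V i := by
        rw [Finset.range_eq_Ico, ← Finset.sum_Ico_consecutive _ (Nat.zero_le r) hr,
          ← Finset.range_eq_Ico]
      have hkey : (r:ℝ) * ∑ i ∈ Finset.Ico r (Fintype.card α), DD V i
          ≤ ((Fintype.card α - r : ℕ):ℝ) * ∑ i ∈ Finset.range r, DD V i := by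
        have e1 : ∑ _i ∈ Finset.range r, ∑ j ∈ Finset.Ico r (Fintype.card α), DD V j
            = (r:ℝ) * ∑ j ∈ Finset.Ico r (Fintype.card α), DD V j := by
          rw [Finset.sum_const, Finset.card_range, nsmul_eq_mul]
        have e2 : ∑ i ∈ Finset.range r, ∑ _j ∈ Finset.Ico r (Fintype.card α), DD V i
            = ((Fintype.card α - r : ℕ):ℝ) * ∑ i ∈ Finset.range r, DD V i := by
          rw [Finset.mul_sum]
          refine Finset.sum_congr rfl fun i _ => ?_
          rw [Finset.sum_const, Nat.card_Ico, nsmul_eq_mul]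
        rw [← e1, ← e2]
        refine Finset.sum_le_sum fun i hi => Finset.sum_le_sum fun j hj => ?_
        rw [Finset.mem_range] at hi
        rw [Finset.mem_Ico] at hj
        exact DD_antitone V hmono hsub (le_trans (Nat.le_of_lt_succ (by omega)) hj.1) hj.2
      have hcast : ((Fintype.card α - r : ℕ):ℝ) = (Fintype.card α : ℝ) - r := by
        exact Nat.cast_sub hr
      rw [hcast] at hkey
      have hchain : (r:ℝ) * ff V (Fintype.card α) ≤ (Fintype.card α : ℝ) * ff V r := by
        rw [hSr, hSc, hsplit]
        nlinarith [hkey]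
      rw [ff_card] at hchain
      rw [div_mul_eq_mul_div, div_le_iff₀ hc0]
      linarith
  exact ⟨main, by linarith⟩
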